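/- arXiv:2207.04492 — 8 statements merged into one kernel-verified Lean document; each statement's English description precedes it below -/
import Mathlib

section
/- If A is an n×n real matrix that is an M-matrix (a Z-matrix with nonnegative inverse), and B is a Z-matrix with B ≥ A entrywise, then B is also an M-matrix. -/
open Matrix

def IsZMatrix {n : ℕ} (A : Matrix (Fin n) (Fin n) ℝ) : Prop :=
  ∀ i j, i ≠ j → A i j ≤ 0

/-- An M-matrix: a Z-matrix that is invertible with entrywise nonnegative inverse. -/
def IsMMatrix {n : ℕ} (A : Matrix (Fin n) (Fin n) ℝ) : Prop :=
  IsZMatrix A ∧ IsUnit A ∧ ∀ i j, 0 ≤ A⁻¹ i j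

/-- D(x) = diag(sign(x)). -/
noncomputable def signD {n : ℕ} (x : Fin n → ℝ) : Matrix (Fin n) (Fin n) ℝ :=
  Matrix.diagonal (fun i => Real.sign (x i))

/-- Componentwise absolute value. -/
def absVec {n : ℕ} (x : Fin n → ℝ) : Fin n → ℝ := fun i => |x i|

/-- Spectral (operator 2-) norm of a matrix. -/
noncomputable def specNorm {n : ℕ} (A : Matrix (Fin n) (Fin n) ℝ) : ℝ :=
  ‖Matrix.toEuclideanCLM (𝕜 := ℝ) A‖

/-!
Let `x = A⁻¹ 1 ≥ 0`. Since `B ≥ A` entrywise, `B x ≥ A x = 1 > 0`. A Z-matrix admitting such a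
vector obeys a minimum principle: if `B z ≥ 0` and `z` had a negative entry, then at an index `i`
minimising `z i / x i =: t < 0` the vector `w = z - t x ≥ 0` vanishes, so `(B w) i ≤ 0` because
the off-diagonal entries of `B` are nonpositive, while `(B w) i = (B z) i - t (B x) i > 0`.
A matrix with `B z ≥ 0 → z ≥ 0` is injective, hence invertible, and its inverse maps the
nonnegative basis vectors to nonnegative vectors.
-/

namespace Matrix

variable {ι 𝕜 : Type*} [Fintype ι] [Field 𝕜] [LinearOrder 𝕜] [IsStrictOrderedRing 𝕜]

/-- Monotone in the sense of Collatz. -/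
def IsMonotone (B : Matrix ι ι 𝕜) : Prop :=
  ∀ z : ι → 𝕜, 0 ≤ B *ᵥ z → 0 ≤ z

theorem mulVec_apply_le_diag_mul {B : Matrix ι ι 𝕜} (hB : ∀ i j, i ≠ j → B i j ≤ 0)
    {x : ι → 𝕜} (hx : 0 ≤ x) (i : ι) : (B *ᵥ x) i ≤ B i i * x i := by
  classical
  rw [mulVec, dotProduct, ← Finset.add_sum_erase _ _ (Finset.mem_univ i), add_le_iff_nonpos_right]
  exact Finset.sum_nonpos fun j hj =>
    mul_nonpos_of_nonpos_of_nonneg (hB i j (Finset.ne_of_mem_erase hj).symm) (hx j)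

theorem isMonotone_of_mulVec_pos {B : Matrix ι ι 𝕜} (hB : ∀ i j, i ≠ j → B i j ≤ 0)
    {x : ι → 𝕜} (hx : 0 ≤ x) (hBx : ∀ i, 0 < (B *ᵥ x) i) : B.IsMonotone := by
  intro z hz
  have hx_pos : ∀ j, 0 < x j := fun j => (hx j).lt_of_ne' fun hxj => by
    simpa [hxj] using (hBx j).trans_le (mulVec_apply_le_diag_mul hB hx j)
  by_contra hneg
  obtain ⟨k, hk⟩ : ∃ k, z k < 0 := by simpa [Pi.le_def] using hneg
  obtain ⟨i, -, hi⟩ := Finset.univ.exists_min_image (fun j => z j / x j) ⟨k, Finset.mem_univ k⟩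
  set t := z i / x i
  have ht : t < 0 := (hi k (Finset.mem_univ k)).trans_lt (div_neg_of_neg_of_pos hk (hx_pos k))
  have hw : 0 ≤ z - t • x := fun j => by
    simpa [sub_nonneg, ← le_div_iff₀ (hx_pos j)] using hi j (Finset.mem_univ j)
  have hwi : (z - t • x) i = 0 := by simp [t, div_mul_cancel₀ _ (hx_pos i).ne']
  have hBw : (B *ᵥ (z - t • x)) i ≤ 0 := by
    simpa [hwi] using mulVec_apply_le_diag_mul hB hw i
  rw [mulVec_sub, mulVec_smul, Pi.sub_apply, Pi.smul_apply, smul_eq_mul] at hBw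
  linarith [show 0 ≤ (B *ᵥ z) i from hz i, mul_neg_of_neg_of_pos ht (hBx i)]

variable [DecidableEq ι] {B : Matrix ι ι 𝕜}

theorem IsMonotone.isUnit (hB : B.IsMonotone) : IsUnit B := by
  rw [← mulVec_injective_iff_isUnit]
  intro z w hzw
  have hzero : B *ᵥ (z - w) = 0 := by rw [mulVec_sub, hzw, sub_self]
  have hneg : B *ᵥ (w - z) = 0 := by rw [← neg_sub, mulVec_neg, hzero, neg_zero]
  exact le_antisymm (sub_nonneg.1 (hB _ hneg.ge)) (sub_nonneg.1 (hB _ hzero.ge))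

theorem IsMonotone.inv_nonneg (hB : B.IsMonotone) (i j : ι) : 0 ≤ B⁻¹ i j := by
  have hcol : B *ᵥ (B⁻¹ *ᵥ Pi.single j 1) = Pi.single j 1 := by
    rw [mulVec_mulVec, mul_nonsing_inv _ ((isUnit_iff_isUnit_det B).1 hB.isUnit), one_mulVec]
  have h := hB _ (hcol ▸ Pi.single_nonneg.2 zero_le_one) i
  rwa [mulVec_single_one, col_apply] at h

end Matrix

theorem stmt_0 {n : ℕ} (A B : Matrix (Fin n) (Fin n) ℝ)
    (hA : IsMMatrix A) (hB : IsZMatrix B) (hge : ∀ i j, A i j ≤ B i j) :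
    IsMMatrix B := by
  obtain ⟨-, hA_unit, hA_inv⟩ := hA
  set x := A⁻¹ *ᵥ fun _ => 1
  have hx : 0 ≤ x := fun i =>
    (Finset.sum_nonneg fun j _ => mul_nonneg (hA_inv i j) zero_le_one : 0 ≤ ∑ j, A⁻¹ i j * 1)
  have hAx : A *ᵥ x = fun _ => 1 := by
    rw [mulVec_mulVec, mul_nonsing_inv _ ((isUnit_iff_isUnit_det A).1 hA_unit), one_mulVec]
  have hBx : ∀ i, 0 < (B *ᵥ x) i := fun i =>
    calc (0 : ℝ) < (A *ᵥ x) i := by rw [hAx]; exact one_pos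
      _ ≤ (B *ᵥ x) i := (Finset.sum_le_sum fun j _ => mul_le_mul_of_nonneg_right (hge i j) (hx j) :
          ∑ j, A i j * x j ≤ ∑ j, B i j * x j)
  have hB_mono := isMonotone_of_mulVec_pos hB hx hBx
  exact ⟨hB, hB_mono.isUnit, hB_mono.inv_nonneg⟩
end

section
/- If A ∈ ℝ^{n×n} satisfies ‖A⁻¹‖ < 1 (spectral norm), then the absolute value equation Ax − |x| = b has a unique solution x ∈ ℝ^n for every b ∈ ℝ^n. -/
open Matrix

/-!
Rewrite the equation as the fixed-point problem `x = A⁻¹ (|x| + b)`. Since `x ↦ |x|` is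
1-Lipschitz for the Euclidean norm, the right-hand side is a contraction with constant
`‖A⁻¹‖ < 1`, and the Banach fixed-point theorem gives exactly one solution.
-/

theorem ContractingWith.existsUnique_isFixedPt {α : Type*} [MetricSpace α] [Nonempty α]
    [CompleteSpace α] {K : NNReal} {f : α → α} (hf : ContractingWith K f) :
    ∃! x, Function.IsFixedPt f x :=
  ⟨fixedPoint f hf, hf.fixedPoint_isFixedPt, fun _ hx => hf.fixedPoint_unique hx⟩

theorem ContinuousLinearMap.contractingWith_apply_add_const {𝕜 E : Type*}
    [NontriviallyNormedField 𝕜] [NormedAddCommGroup E] [NormedSpace 𝕜 E]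
    (T : E →L[𝕜] E) (hT : ‖T‖ < 1) {g : E → E} (hg : LipschitzWith 1 g) (c : E) :
    ContractingWith ‖T‖₊ fun x => T (g x + c) := by
  refine ⟨hT, ?_⟩
  simpa only [mul_one, Function.comp_def] using
    T.lipschitz.comp ((isometry_add_right c).lipschitz.comp hg)

theorem Matrix.inv_mulVec_eq_iff_eq_mulVec {ι R : Type*} [Fintype ι] [DecidableEq ι] [CommRing R]
    {A : Matrix ι ι R} (hA : IsUnit A) {u v : ι → R} : A⁻¹ *ᵥ u = v ↔ u = A *ᵥ v := by
  have hdet := (isUnit_iff_isUnit_det A).mp hA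
  constructor
  · rintro rfl
    rw [mulVec_mulVec, mul_nonsing_inv A hdet, one_mulVec]
  · rintro rfl
    rw [mulVec_mulVec, nonsing_inv_mul A hdet, one_mulVec]

theorem lipschitzWith_one_toLp_absVec {n : ℕ} :
    LipschitzWith 1 fun y : EuclideanSpace ℝ (Fin n) => WithLp.toLp 2 (absVec y.ofLp) := by
  refine LipschitzWith.of_dist_le_mul fun x y => ?_
  simp only [NNReal.coe_one, one_mul, EuclideanSpace.dist_eq]
  gcongr with i
  simpa [absVec, Real.dist_eq] using abs_abs_sub_abs_le_abs_sub (x i) (y i)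

theorem stmt_1 {n : ℕ} (A : Matrix (Fin n) (Fin n) ℝ)
    (hA : IsUnit A) (hnorm : specNorm A⁻¹ < 1) :
    ∀ b : Fin n → ℝ, ∃! x : Fin n → ℝ, A.mulVec x - absVec x = b := by
  intro b
  have hfix := ((toEuclideanCLM (𝕜 := ℝ) A⁻¹).contractingWith_apply_add_const hnorm
    lipschitzWith_one_toLp_absVec (WithLp.toLp 2 b)).existsUnique_isFixedPt
  refine ((WithLp.equiv 2 (Fin n → ℝ)).symm.existsUnique_congr fun x => ?_).mpr hfix
  simp only [Function.IsFixedPt, WithLp.equiv_symm_apply, ← WithLp.toLp_add, toEuclideanCLM_toLp,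
    (WithLp.toLp_injective 2).eq_iff, inv_mulVec_eq_iff_eq_mulVec hA]
  exact sub_eq_iff_eq_add'.trans eq_comm
end

section
/- Suppose A − I is an M-matrix. Then the absolute value equation Ax − |x| = b has at most one solution for every b ∈ ℝ^n. -/
open Matrix

theorem stmt_7 {n : ℕ} (A : Matrix (Fin n) (Fin n) ℝ)
    (h : IsMMatrix (A - 1)) (b : Fin n → ℝ) (x y : Fin n → ℝ)
    (hx : A.mulVec x - absVec x = b) (hy : A.mulVec y - absVec y = b) :
    x = y := by
  obtain ⟨hZ, hU, hInv⟩ := h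
  set M : Matrix (Fin n) (Fin n) ℝ := A - 1 with hM
  set u : Fin n → ℝ := x - y with hu
  set w : Fin n → ℝ := fun i => |u i| with hw
  -- A.mulVec u = absVec x - absVec y
  have hAu : ∀ i, A.mulVec u i = |x i| - |y i| := by
    intro i
    have h1 := congrFun (hx.trans hy.symm) i
    have h2 : A.mulVec u i = A.mulVec x i - A.mulVec y i := by
      rw [hu, Matrix.mulVec_sub]; rfl
    simp only [Pi.sub_apply, absVec] at h1 ⊢
    rw [h2]; linarith
  -- key equation componentwise : M i i * u i + u i + (off-diag sum) = v i
  have hkey : ∀ i, (M.mulVec w) i ≤ 0 := by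
    intro i
    have hsplit : ∀ z : Fin n → ℝ, (M.mulVec z) i
        = M i i * z i + ∑ j ∈ Finset.univ.erase i, M i j * z j := by
      intro z
      rw [Matrix.mulVec, dotProduct]
      exact (Finset.add_sum_erase _ _ (Finset.mem_univ i)).symm
    have hMA : ∀ j, j ≠ i → M i j = A i j := by
      intro j hj
      simp [hM, Matrix.one_apply, (Ne.symm hj)]
    -- the equation for u : (M i i + 1) * u i = v i - S
    have hequ : (M i i + 1) * u i
        = (|x i| - |y i|) - ∑ j ∈ Finset.univ.erase i, M i j * u j := by
      have h1 : (A.mulVec u) i = M i i * u i + u i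
          + ∑ j ∈ Finset.univ.erase i, M i j * u j := by
        have h2 : (A.mulVec u) i = A i i * u i
            + ∑ j ∈ Finset.univ.erase i, A i j * u j := by
          rw [Matrix.mulVec, dotProduct]
          exact (Finset.add_sum_erase _ _ (Finset.mem_univ i)).symm
        have h3 : A i i = M i i + 1 := by simp [hM, Matrix.one_apply]
        have h4 : ∑ j ∈ Finset.univ.erase i, A i j * u j
            = ∑ j ∈ Finset.univ.erase i, M i j * u j := by
          refine Finset.sum_congr rfl fun j hj => ?_
          rw [hMA j (Finset.ne_of_mem_erase hj)]
        rw [h2, h3, h4]; ring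
      have := hAu i
      rw [h1] at this
      linarith
    -- bound the off-diagonal sum of w by |off-diagonal sum of u|
    set S : ℝ := ∑ j ∈ Finset.univ.erase i, M i j * u j with hS
    have hoff : ∑ j ∈ Finset.univ.erase i, M i j * w j ≤ -|S| := by
      have h1 : |S| ≤ ∑ j ∈ Finset.univ.erase i, |M i j * u j| :=
        Finset.abs_sum_le_sum_abs _ _
      have h2 : ∑ j ∈ Finset.univ.erase i, |M i j * u j|
          = ∑ j ∈ Finset.univ.erase i, -(M i j * w j) := by
        refine Finset.sum_congr rfl fun j hj => ?_
        have hij : M i j ≤ 0 :=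
          hZ i j (Ne.symm (Finset.ne_of_mem_erase hj))
        rw [abs_mul, abs_of_nonpos hij, hw]
        ring
      rw [h2, Finset.sum_neg_distrib] at h1
      linarith
    -- bound the diagonal term
    have hdiag : M i i * w i ≤ |S| := by
      have h1 : (M i i + 1) * w i ≤ |(M i i + 1) * u i| := by
        rw [abs_mul, hw]
        exact mul_le_mul_of_nonneg_right (le_abs_self _) (abs_nonneg _)
      have h2 : |(M i i + 1) * u i| ≤ |(|x i| - |y i|)| + |S| := by
        rw [hequ]; exact abs_sub _ _
      have h3 : |(|x i| - |y i|)| ≤ |u i| := by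
        have := abs_abs_sub_abs_le_abs_sub (x i) (y i)
        simpa [hu] using this
      have h4 : (M i i + 1) * w i = M i i * w i + w i := by ring
      have h5 : w i = |u i| := rfl
      nlinarith [abs_nonneg (u i)]
    rw [hsplit]
    linarith
  -- conclude : w = M⁻¹ (M w) ≤ 0
  have hMinv : M⁻¹ * M = 1 := Matrix.nonsing_inv_mul M ((Matrix.isUnit_iff_isUnit_det M).mp hU)
  have hwle : ∀ i, w i ≤ 0 := by
    intro i
    have h1 : (M⁻¹).mulVec (M.mulVec w) = w := by
      rw [Matrix.mulVec_mulVec, hMinv, Matrix.one_mulVec]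
    have h2 : (M⁻¹).mulVec (M.mulVec w) i ≤ 0 := by
      rw [Matrix.mulVec, dotProduct]
      refine Finset.sum_nonpos fun j _ => ?_
      exact mul_nonpos_of_nonneg_of_nonpos (hInv i j) (hkey j)
    rw [h1] at h2
    exact h2
  funext i
  have h1 : |u i| ≤ 0 := hwle i
  have h2 : u i = 0 := abs_nonpos_iff.mp h1
  have : x i - y i = 0 := h2
  linarith
end

section
/- Let A − I be an M-matrix and b ∈ ℝ^n. The generalized Newton method x^{k+1} = (A − D(x^k))⁻¹ b, started from any x^0 ∈ ℝ^n, reaches an exact solution of Ax − |x| = b in at most 2n + 2 iterations. -/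
open Matrix

/-!
Since `A - 1` is an M-matrix, so is every Newton matrix `A - D(x) = (A - 1) + (1 - D(x))`.
Subtracting consecutive Newton equations gives
`(A - D(x^{k+1})) (x^{k+2} - x^{k+1}) = |x^{k+1}| - D(x^k) x^{k+1} ≥ 0`,
so from `k = 1` on the iterates increase, and with them their sign patterns. The integer
`∑ i, sign (x^k)_i ∈ [-n, n]` cannot increase `2n + 1` times in a row, hence two consecutive
iterates `x^{j+1}, x^{j+2}` with `j ≤ 2n` have the same signs, and then
`A x^{j+2} - |x^{j+2}| = (A - D(x^{j+1})) x^{j+2} = b`.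
-/

namespace Real

lemma neg_one_le_sign (r : ℝ) : -1 ≤ sign r := by
  rcases sign_apply_eq r with h | h | h <;> rw [h] <;> norm_num

lemma sign_le_one (r : ℝ) : sign r ≤ 1 := by
  rcases sign_apply_eq r with h | h | h <;> rw [h] <;> norm_num

lemma abs_sign_le_one (r : ℝ) : |sign r| ≤ 1 :=
  abs_le.2 ⟨neg_one_le_sign r, sign_le_one r⟩

lemma sign_mono : Monotone sign := by
  intro a b hab
  rcases lt_trichotomy a 0 with ha | rfl | ha
  · rw [sign_of_neg ha]; exact neg_one_le_sign b
  · rcases hab.eq_or_lt with rfl | hb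
    · exact le_rfl
    · rw [sign_zero, sign_of_pos hb]; exact zero_le_one
  · rw [sign_of_pos ha, sign_of_pos (ha.trans_le hab)]

lemma add_one_le_sign_of_lt {a b : ℝ} (h : sign a < sign b) : sign a + 1 ≤ sign b := by
  rcases sign_apply_eq a with ha | ha | ha <;> rcases sign_apply_eq b with hb | hb | hb <;>
    linarith

lemma sign_mul_self (r : ℝ) : sign r * r = |r| := by
  rcases lt_trichotomy r 0 with h | rfl | h
  · rw [sign_of_neg h, abs_of_neg h, neg_one_mul]
  · simp
  · rw [sign_of_pos h, abs_of_pos h, one_mul]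

lemma sign_mul_le_abs (r a : ℝ) : sign r * a ≤ |a| :=
  (le_abs_self _).trans <| by
    rw [abs_mul]; exact mul_le_of_le_one_left (abs_nonneg a) (abs_sign_le_one r)

end Real

section SignPattern

variable {ι : Type*} [Fintype ι]

lemma abs_sum_sign_le_card (v : ι → ℝ) : |∑ i, Real.sign (v i)| ≤ Fintype.card ι :=
  calc |∑ i, Real.sign (v i)| ≤ ∑ i, |Real.sign (v i)| := Finset.abs_sum_le_sum_abs _ _
    _ ≤ ∑ _i : ι, (1 : ℝ) := Finset.sum_le_sum fun i _ => Real.abs_sign_le_one (v i)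
    _ = Fintype.card ι := by simp

lemma sum_sign_add_one_le {v w : ι → ℝ} (hle : ∀ i, Real.sign (v i) ≤ Real.sign (w i))
    {i₀ : ι} (hne : Real.sign (v i₀) ≠ Real.sign (w i₀)) :
    ∑ i, Real.sign (v i) + 1 ≤ ∑ i, Real.sign (w i) := by
  have hgap : 1 ≤ Real.sign (w i₀) - Real.sign (v i₀) := by
    linarith [Real.add_one_le_sign_of_lt ((hle i₀).lt_of_ne hne)]
  have hsum : Real.sign (w i₀) - Real.sign (v i₀) ≤ ∑ i, (Real.sign (w i) - Real.sign (v i)) :=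
    Finset.single_le_sum (f := fun i => Real.sign (w i) - Real.sign (v i))
      (fun i _ => sub_nonneg.2 (hle i)) (Finset.mem_univ i₀)
  rw [Finset.sum_sub_distrib] at hsum
  linarith

/-- The potential `∑ i, sign (u k i) ∈ [-card ι, card ι]` grows by at least one at every step
where the sign pattern changes. -/
lemma exists_sign_eq_sign_succ (u : ℕ → ι → ℝ)
    (hu : ∀ k i, Real.sign (u k i) ≤ Real.sign (u (k + 1) i)) :
    ∃ j ≤ 2 * Fintype.card ι, ∀ i, Real.sign (u j i) = Real.sign (u (j + 1) i) := by
  by_contra! hchange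
  set Φ : ℕ → ℝ := fun k => ∑ i, Real.sign (u k i)
  have hgrowth : ∀ k ≤ 2 * Fintype.card ι + 1, Φ 0 + k ≤ Φ k := by
    intro k hk
    induction k with
    | zero => simp
    | succ k ih =>
      obtain ⟨i₀, hi₀⟩ := hchange k (by omega)
      have := sum_sign_add_one_le (hu k) hi₀
      push_cast
      linarith [ih (by omega)]
  have h₀ := abs_le.1 (abs_sum_sign_le_card (u 0))
  have h₁ := abs_le.1 (abs_sum_sign_le_card (u (2 * Fintype.card ι + 1)))
  have := hgrowth _ le_rfl
  push_cast at this
  linarith [h₀.1, h₁.2]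

end SignPattern

section MMatrix

variable {n : ℕ}

/-- If `y` had a negative entry, let `t > 0` be least with `z = y + t • e ≥ 0`; then `z m = 0`
for some `m`, so row `m` of the Z-matrix `B` gives `(B z) m ≤ 0`, while `B z ≥ t • B e > 0`. -/
lemma IsZMatrix.nonneg_of_mulVec_nonneg {B : Matrix (Fin n) (Fin n) ℝ} (hB : IsZMatrix B)
    {e : Fin n → ℝ} (he : ∀ i, 0 < e i) (hBe : ∀ i, 0 < (B *ᵥ e) i)
    {y : Fin n → ℝ} (hy : 0 ≤ B *ᵥ y) : 0 ≤ y := by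
  by_contra! hneg
  obtain ⟨i₀, hi₀⟩ : ∃ i, y i < 0 := by simpa [Pi.le_def] using hneg
  obtain ⟨m, -, hm⟩ := Finset.exists_max_image Finset.univ (fun i => -y i / e i)
    ⟨i₀, Finset.mem_univ _⟩
  set t := -y m / e m
  have ht : 0 < t :=
    (div_pos (neg_pos.2 hi₀) (he i₀)).trans_le (hm i₀ (Finset.mem_univ _))
  set z := y + t • e with hz
  have hz_nonneg : ∀ i, 0 ≤ z i := fun i => by
    have := (div_le_iff₀ (he i)).1 (hm i (Finset.mem_univ _))
    simp only [hz, Pi.add_apply, Pi.smul_apply, smul_eq_mul]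
    linarith
  have hzm : z m = 0 := by
    simp only [hz, Pi.add_apply, Pi.smul_apply, smul_eq_mul, t, div_mul_cancel₀ _ (he m).ne']
    ring
  have hpos : 0 < (B *ᵥ z) m := by
    rw [hz, mulVec_add, mulVec_smul, Pi.add_apply, Pi.smul_apply, smul_eq_mul]
    nlinarith [show 0 ≤ (B *ᵥ y) m from hy m, hBe m]
  have hnonpos : (B *ᵥ z) m ≤ 0 := by
    rw [mulVec, dotProduct]
    refine Finset.sum_nonpos fun j _ => ?_
    rcases eq_or_ne j m with rfl | hjm
    · rw [hzm, mul_zero]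
    · exact mul_nonpos_of_nonpos_of_nonneg (hB m j hjm.symm) (hz_nonneg j)
  linarith

lemma IsZMatrix.isMMatrix_of_pos_mulVec {B : Matrix (Fin n) (Fin n) ℝ} (hB : IsZMatrix B)
    {e : Fin n → ℝ} (he : ∀ i, 0 < e i) (hBe : ∀ i, 0 < (B *ᵥ e) i) : IsMMatrix B := by
  have hdet : IsUnit B.det := by
    refine isUnit_iff_ne_zero.2 fun hdet => ?_
    obtain ⟨v, hv0, hv⟩ := exists_mulVec_eq_zero_iff.2 hdet
    have h₁ := hB.nonneg_of_mulVec_nonneg he hBe (y := v) hv.ge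
    have h₂ := hB.nonneg_of_mulVec_nonneg he hBe (y := -v) (by rw [mulVec_neg, hv, neg_zero])
    exact hv0 (le_antisymm (neg_nonneg.1 h₂) h₁)
  refine ⟨hB, (isUnit_iff_isUnit_det B).2 hdet, fun i j => ?_⟩
  have hcol : B *ᵥ (B⁻¹ *ᵥ Pi.single j 1) = Pi.single j 1 := by
    rw [mulVec_mulVec, mul_nonsing_inv B hdet, one_mulVec]
  have hcol_nonneg := hB.nonneg_of_mulVec_nonneg he hBe
    (by rw [hcol]; exact Pi.single_nonneg.2 zero_le_one) i
  rwa [mulVec_single_one] at hcol_nonneg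

namespace IsMMatrix

variable {M : Matrix (Fin n) (Fin n) ℝ}

lemma isUnit_det (hM : IsMMatrix M) : IsUnit M.det :=
  (isUnit_iff_isUnit_det M).1 hM.2.1

lemma mulVec_inv_mulVec (hM : IsMMatrix M) (b : Fin n → ℝ) : M *ᵥ (M⁻¹ *ᵥ b) = b := by
  rw [mulVec_mulVec, mul_nonsing_inv M hM.isUnit_det, one_mulVec]

/-- The witness is `e = M⁻¹ 1`, the row sums of `M⁻¹`; no row of the invertible `M⁻¹` vanishes. -/
lemma exists_pos_mulVec_eq_one (hM : IsMMatrix M) : ∃ e, (∀ i, 0 < e i) ∧ M *ᵥ e = 1 := by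
  refine ⟨M⁻¹ *ᵥ 1, fun i => ?_, hM.mulVec_inv_mulVec 1⟩
  have hrow : (M⁻¹ *ᵥ 1) i = ∑ j, M⁻¹ i j := by simp [mulVec, dotProduct]
  rw [hrow]
  refine (Finset.sum_nonneg fun j _ => hM.2.2 i j).lt_of_ne fun hzero => ?_
  have hvanish := (Finset.sum_eq_zero_iff_of_nonneg fun j _ => hM.2.2 i j).1 hzero.symm
  have hdiag : (M⁻¹ * M) i i = 1 := by rw [nonsing_inv_mul M hM.isUnit_det, one_apply_eq]
  simp [mul_apply, hvanish] at hdiag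

lemma add_diagonal (hM : IsMMatrix M) {d : Fin n → ℝ} (hd : 0 ≤ d) :
    IsMMatrix (M + diagonal d) := by
  obtain ⟨e, he, hMe⟩ := hM.exists_pos_mulVec_eq_one
  refine IsZMatrix.isMMatrix_of_pos_mulVec (e := e) (fun i j hij => ?_) he fun i => ?_
  · simpa [diagonal_apply_ne _ hij] using hM.1 i j hij
  · rw [add_mulVec, hMe, Pi.add_apply, mulVec_diagonal, Pi.one_apply]
    linarith [mul_nonneg (hd i) (he i).le]

lemma nonneg_of_mulVec_nonneg (hM : IsMMatrix M) {y : Fin n → ℝ} (hy : 0 ≤ M *ᵥ y) : 0 ≤ y := by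
  obtain ⟨e, he, hMe⟩ := hM.exists_pos_mulVec_eq_one
  exact hM.1.nonneg_of_mulVec_nonneg he (by simp [hMe]) hy

end IsMMatrix

end MMatrix

section Newton

variable {n : ℕ} {A : Matrix (Fin n) (Fin n) ℝ}

lemma signD_mulVec_self (v : Fin n → ℝ) : signD v *ᵥ v = absVec v := by
  ext i
  rw [signD, mulVec_diagonal, Real.sign_mul_self, absVec]

lemma signD_mulVec_le_absVec (u v : Fin n → ℝ) : signD u *ᵥ v ≤ absVec v := fun i => by
  rw [signD, mulVec_diagonal]
  exact Real.sign_mul_le_abs _ _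

lemma isMMatrix_sub_signD (h : IsMMatrix (A - 1)) (x : Fin n → ℝ) : IsMMatrix (A - signD x) := by
  have hsplit : A - signD x = (A - 1) + diagonal (fun i => 1 - Real.sign (x i)) := by
    rw [signD, ← diagonal_one, ← diagonal_sub]; abel
  rw [hsplit]
  exact h.add_diagonal fun i => sub_nonneg.2 (Real.sign_le_one _)

lemma le_of_newton_steps (h : IsMMatrix (A - 1)) {b u v w : Fin n → ℝ}
    (hv : (A - signD u) *ᵥ v = b) (hw : (A - signD v) *ᵥ w = b) : v ≤ w := by
  have hdiff : (A - signD v) *ᵥ (w - v) = absVec v - signD u *ᵥ v := by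
    rw [mulVec_sub, hw, ← hv, sub_mulVec, sub_mulVec, signD_mulVec_self]
    abel
  refine sub_nonneg.1 ((isMMatrix_sub_signD h v).nonneg_of_mulVec_nonneg ?_)
  rw [hdiff]
  exact sub_nonneg.2 (signD_mulVec_le_absVec u v)

lemma mulVec_sub_absVec_eq_of_sign_eq {b v w : Fin n → ℝ} (hw : (A - signD v) *ᵥ w = b)
    (hvw : ∀ i, Real.sign (v i) = Real.sign (w i)) : A *ᵥ w - absVec w = b := by
  have hD : signD v = signD w := congrArg diagonal (funext hvw)
  rw [← signD_mulVec_self, ← sub_mulVec, ← hD, hw]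

end Newton

theorem stmt_10_general {n : ℕ} (A : Matrix (Fin n) (Fin n) ℝ)
    (h : IsMMatrix (A - 1)) (b : Fin n → ℝ) (x : ℕ → Fin n → ℝ)
    (hiter : ∀ k, x (k + 1) = (A - signD (x k))⁻¹.mulVec b) :
    ∃ k ≤ 2 * n + 2, A.mulVec (x k) - absVec (x k) = b := by
  have hstep : ∀ k, (A - signD (x k)) *ᵥ x (k + 1) = b := fun k => by
    rw [hiter k]
    exact (isMMatrix_sub_signD h _).mulVec_inv_mulVec b
  have hmono : ∀ k, x (k + 1) ≤ x (k + 2) := fun k =>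
    le_of_newton_steps h (hstep k) (hstep (k + 1))
  obtain ⟨j, hj, hsign⟩ := exists_sign_eq_sign_succ (fun k => x (k + 1))
    fun k i => Real.sign_mono (hmono k i)
  rw [Fintype.card_fin] at hj
  exact ⟨j + 2, by omega, mulVec_sub_absVec_eq_of_sign_eq (hstep (j + 1)) hsign⟩

theorem stmt_10 {n : ℕ} (hn : 1 ≤ n) (A : Matrix (Fin n) (Fin n) ℝ)
    (h : IsMMatrix (A - 1)) (b : Fin n → ℝ) (x : ℕ → Fin n → ℝ)
    (hiter : ∀ k, x (k + 1) = (A - signD (x k))⁻¹.mulVec b) :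
    ∃ k ≤ 2 * n + 2, A.mulVec (x k) - absVec (x k) = b :=
  stmt_10_general A h b x hiter
end

section
/- Suppose the null space of Aᵀ − I is spanned by a vector v > 0 (componentwise), and A − I + D is an M-matrix for every nonzero nonnegative diagonal matrix D. If vᵀb < 0 and x^0 satisfies D(x^0) ≠ I, then every generalized Newton iterate x^{k+1} = (A − D(x^k))⁻¹ b is well defined and A − D(x^k) is an M-matrix for all k ≥ 0. -/
open Matrix

lemma real_sign_le_one (t : ℝ) : Real.sign t ≤ 1 := by
  rcases lt_trichotomy t 0 with h|h|h
  · rw [Real.sign_of_neg h]; norm_num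
  · simp [h]
  · rw [Real.sign_of_pos h]

lemma real_sign_eq_one {t : ℝ} (h : Real.sign t = 1) : 0 < t := by
  rcases lt_trichotomy t 0 with h'|h'|h'
  · rw [Real.sign_of_neg h'] at h; norm_num at h
  · simp [h'] at h
  · exact h'

theorem stmt_11 {n : ℕ} (A : Matrix (Fin n) (Fin n) ℝ) (v b : Fin n → ℝ)
    (hker : LinearMap.ker (Matrix.toLin' (Aᵀ - 1)) = Submodule.span ℝ {v})
    (hv : ∀ i, 0 < v i)
    (hM : ∀ d : Fin n → ℝ, (∀ i, 0 ≤ d i) → d ≠ 0 →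
      IsMMatrix (A - 1 + Matrix.diagonal d))
    (hb : v ⬝ᵥ b < 0)
    (x : ℕ → Fin n → ℝ) (h0 : signD (x 0) ≠ 1)
    (hiter : ∀ k, x (k + 1) = (A - signD (x k))⁻¹.mulVec b) :
    ∀ k, IsMMatrix (A - signD (x k)) := by
  have hvker : (Aᵀ - 1) *ᵥ v = 0 := by
    have hmem : v ∈ LinearMap.ker (Matrix.toLin' (Aᵀ - 1)) := by
      rw [hker]; exact Submodule.mem_span_singleton_self v
    have h := hmem
    simp only [LinearMap.mem_ker, Matrix.toLin'_apply] at h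
    exact h
  have key : ∀ k, signD (x k) ≠ 1 → IsMMatrix (A - signD (x k)) := by
    intro k hk
    have hd : A - signD (x k) = A - 1 + Matrix.diagonal (fun i => 1 - Real.sign (x k i)) := by
      ext i j
      by_cases h : i = j <;>
        simp [signD, Matrix.diagonal, h, Matrix.one_apply, Matrix.sub_apply, Matrix.add_apply]
    have hdnn : ∀ i, 0 ≤ 1 - Real.sign (x k i) := fun i => by
      linarith [real_sign_le_one (x k i)]
    have hdne : (fun i => 1 - Real.sign (x k i)) ≠ 0 := by
      intro hzero
      apply hk
      have : ∀ i, Real.sign (x k i) = 1 := by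
        intro i
        have := congrFun hzero i
        simp at this
        linarith
      simp only [signD]
      rw [show (fun i => Real.sign (x k i)) = fun _ => (1:ℝ) from funext this]
      simp
    rw [hd]
    exact hM _ hdnn hdne
  have hne : ∀ k, signD (x k) ≠ 1 := by
    intro k
    induction k with
    | zero => exact h0
    | succ k ih =>
      have hMk := key k ih
      have hdet : IsUnit (A - signD (x k)).det :=
        (Matrix.isUnit_iff_isUnit_det _).mp hMk.2.1
      have hx : (A - signD (x k)) *ᵥ (x (k + 1)) = b := by
        rw [hiter k, Matrix.mulVec_mulVec, Matrix.mul_nonsing_inv _ hdet, Matrix.one_mulVec]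
      intro hcontra
      have hpos : ∀ i, 0 < x (k + 1) i := by
        intro i
        apply real_sign_eq_one
        have := congrFun (congrFun hcontra i) i
        simpa [signD, Matrix.one_apply] using this
      -- v ⬝ᵥ b = ∑ v i * (1 - sign(x k i)) * x (k+1) i ≥ 0
      have hsplit : A - signD (x k)
          = (A - 1) + Matrix.diagonal (fun i => 1 - Real.sign (x k i)) := by
      -- same as hd above
        ext i j
        by_cases h : i = j <;>
          simp [signD, Matrix.diagonal, h, Matrix.one_apply, Matrix.sub_apply,
            Matrix.add_apply]
      have hvA : v ᵥ* (A - 1) = 0 := by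
        have : (A - 1) = (Aᵀ - 1)ᵀ := by simp [Matrix.transpose_sub]
        rw [this, Matrix.vecMul_transpose, hvker]
      have hcomp : v ⬝ᵥ b = ∑ i, v i * (1 - Real.sign (x k i)) * x (k + 1) i := by
        rw [← hx, Matrix.dotProduct_mulVec, hsplit, Matrix.vecMul_add, hvA, zero_add]
        simp [dotProduct, Matrix.vecMul_diagonal]
      have : 0 ≤ v ⬝ᵥ b := by
        rw [hcomp]
        apply Finset.sum_nonneg
        intro i _
        have h0 := hv i
        have h1 : 0 ≤ 1 - Real.sign (x k i) := by linarith [real_sign_le_one (x k i)]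
        have h2 := (hpos i).le
        positivity
      linarith
  intro k
  exact key k (hne k)
end

section
/- Suppose N(Aᵀ − I) = span(v) with v > 0. If vᵀb > 0, then the absolute value equation Ax − |x| = b has no solution. -/
open Matrix

theorem stmt_13 {n : ℕ} (A : Matrix (Fin n) (Fin n) ℝ) (v b : Fin n → ℝ)
    (hker : LinearMap.ker (Matrix.toLin' (Aᵀ - 1)) = Submodule.span ℝ {v})
    (hv : ∀ i, 0 < v i)
    (hb : 0 < v ⬝ᵥ b) :
    ¬ ∃ x : Fin n → ℝ, A.mulVec x - absVec x = b := by
  rintro ⟨x, hx⟩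
  have hvmem : v ∈ LinearMap.ker (Matrix.toLin' (Aᵀ - 1)) := by
    rw [hker]; exact Submodule.mem_span_singleton_self v
  have hAv : Aᵀ.mulVec v = v := by
    have := LinearMap.mem_ker.mp hvmem
    rw [Matrix.toLin'_apply, Matrix.sub_mulVec, Matrix.one_mulVec, sub_eq_zero] at this
    exact this
  have h1 : v ⬝ᵥ A.mulVec x = v ⬝ᵥ x := by
    rw [Matrix.dotProduct_mulVec, ← Matrix.mulVec_transpose, hAv]
  have h2 : v ⬝ᵥ absVec x ≥ v ⬝ᵥ x :=
    Finset.sum_le_sum fun i _ => mul_le_mul_of_nonneg_left (le_abs_self _) (hv i).le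
  have := congrArg (fun y => v ⬝ᵥ y) hx
  simp only [dotProduct_sub, h1] at this
  linarith
end

section
/- Suppose A ∈ ℝ^{n×n} is symmetric, N(A − I) = span(v) with v > 0, and vᵀb = 0. If AVE Ax − |x| = b has a solution obtained as x = u − αv with (A − I)u = b and α < minᵢ(uᵢ/vᵢ), then x > 0 and x solves Ax − |x| = b; in particular the solution set is infinite. -/
open Matrix

theorem stmt_14 {n : ℕ} (hn : 0 < n) (A : Matrix (Fin n) (Fin n) ℝ)
    (hsymm : A.IsSymm) (v b : Fin n → ℝ)
    (hker : LinearMap.ker (Matrix.toLin' (A - 1)) = Submodule.span ℝ {v})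
    (hv : ∀ i, 0 < v i)
    (hb : v ⬝ᵥ b = 0)
    (u : Fin n → ℝ) (hu : (A - 1).mulVec u = b)
    (α : ℝ) (hα : ∀ i, α < u i / v i) :
    (∀ i, 0 < (u - α • v) i) ∧
      A.mulVec (u - α • v) - absVec (u - α • v) = b ∧
      {y : Fin n → ℝ | A.mulVec y - absVec y = b}.Infinite := by
  have hvker : (A - 1).mulVec v = 0 := by
    have hmem : v ∈ LinearMap.ker (Matrix.toLin' (A - 1)) := by
      rw [hker]; exact Submodule.mem_span_singleton_self v
    rw [Matrix.sub_mulVec, Matrix.one_mulVec]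
    simpa [Matrix.toLin'_apply, Matrix.sub_mulVec, Matrix.one_mulVec] using hmem
  have key : ∀ β ≤ α, (∀ i, 0 < (u - β • v) i) ∧
      A.mulVec (u - β • v) - absVec (u - β • v) = b := by
    intro β hβ
    have hpos : ∀ i, 0 < (u - β • v) i := by
      intro i
      have h1 : α * v i < u i := (lt_div_iff₀ (hv i)).mp (hα i)
      have h2 : β * v i ≤ α * v i := mul_le_mul_of_nonneg_right hβ (hv i).le
      simp only [Pi.sub_apply, Pi.smul_apply, smul_eq_mul]
      linarith
    refine ⟨hpos, ?_⟩
    have habs : absVec (u - β • v) = u - β • v :=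
      funext fun i => abs_of_pos (hpos i)
    rw [habs]
    have h3 : A.mulVec (u - β • v) - (u - β • v) = (A - 1).mulVec (u - β • v) := by
      simp [Matrix.sub_mulVec, Matrix.one_mulVec]
    rw [h3, Matrix.mulVec_sub, Matrix.mulVec_smul, hvker, hu]
    simp
  obtain ⟨h1, h2⟩ := key α le_rfl
  refine ⟨h1, h2, ?_⟩
  have hinj : Set.InjOn (fun β : ℝ => u - β • v) (Set.Iic α) := by
    intro β₁ _ β₂ _ h
    have := congrFun h ⟨0, hn⟩
    simp only [Pi.sub_apply, Pi.smul_apply, smul_eq_mul] at this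
    have hv0 := (hv ⟨0, hn⟩).ne'
    have : β₁ * v ⟨0, hn⟩ = β₂ * v ⟨0, hn⟩ := by linarith
    exact mul_right_cancel₀ hv0 this
  have hsub : (fun β : ℝ => u - β • v) '' (Set.Iic α) ⊆
      {y : Fin n → ℝ | A.mulVec y - absVec y = b} := by
    rintro _ ⟨β, hβ, rfl⟩
    exact (key β hβ).2
  exact ((Set.Iic_infinite α).image hinj).mono hsub
end

section
/- If A − I is an M-matrix, then the spectral radius of |A⁻¹| (entrywise absolute value of A⁻¹) is strictly less than 1. -/
/-!
Put `w = (A - 1)⁻¹ 𝟙`, which is positive. Then `A w = 𝟙 + w > 0`, and for a Z-matrix with a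
positive vector mapped to a positive vector, looking at an index minimizing `x i / w i` shows
`A x ≥ 0 → x ≥ 0`; so `A` is an M-matrix and `|A⁻¹| = A⁻¹`. Finally `A⁻¹ w = w - A⁻¹ 𝟙 < w`
componentwise, so after the diagonal similarity by `w` the matrix `A⁻¹` has `ℓ∞` operator norm
less than `1`.
-/

open Matrix

namespace Matrix

variable {ι : Type*} [Fintype ι]

theorem mulVec_pos_of_nonneg_of_mul_eq_one [DecidableEq ι] {R : Type*} [Semiring R]
    [PartialOrder R] [IsStrictOrderedRing R] {B C : Matrix ι ι R} (hB : ∀ i j, 0 ≤ B i j)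
    (hBC : B * C = 1) {v : ι → R} (hv : ∀ i, 0 < v i) (i : ι) : 0 < (B *ᵥ v) i := by
  obtain ⟨j, hj⟩ : ∃ j, B i j ≠ 0 := by
    by_contra! hrow
    simpa [mul_apply, hrow] using congr_fun (congr_fun hBC i) i
  exact Finset.sum_pos' (fun k _ => mul_nonneg (hB i k) (hv k).le)
    ⟨j, Finset.mem_univ j, mul_pos ((hB i j).lt_of_ne' hj) (hv j)⟩

section MinimumPrinciple

variable {R : Type*} [Field R] [LinearOrder R] [IsStrictOrderedRing R]

theorem nonneg_of_mulVec_nonneg {A : Matrix ι ι R} (hA : ∀ i j, i ≠ j → A i j ≤ 0)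
    {w : ι → R} (hw : ∀ i, 0 < w i) (hAw : ∀ i, 0 < (A *ᵥ w) i)
    {x : ι → R} (hAx : 0 ≤ A *ᵥ x) : 0 ≤ x := by
  intro i
  by_contra! hxi
  have : Nonempty ι := ⟨i⟩
  obtain ⟨k, hk⟩ := Finite.exists_min fun j => x j / w j
  set t := x k / w k
  have ht : t < 0 := (hk i).trans_lt (div_neg_of_neg_of_pos hxi (hw i))
  -- `x - t • w` is nonnegative and vanishes at `k`, so `(A *ᵥ (x - t • w)) k ≤ 0`
  have hshift : (A *ᵥ x) k - t * (A *ᵥ w) k = ∑ j, A k j * (x j - t * w j) := by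
    simp only [mulVec, dotProduct, Finset.mul_sum, mul_sub, Finset.sum_sub_distrib]
    ring_nf
  have hrow : ∑ j, A k j * (x j - t * w j) ≤ 0 := by
    refine Finset.sum_nonpos fun j _ => ?_
    rcases eq_or_ne k j with rfl | hkj
    · simp [t, div_mul_cancel₀ _ (hw k).ne']
    · refine mul_nonpos_of_nonpos_of_nonneg (hA k j hkj) ?_
      have := hk j
      rw [le_div_iff₀ (hw j)] at this
      linarith
  have hxk : 0 ≤ (A *ᵥ x) k := hAx k
  linarith [mul_neg_of_neg_of_pos ht (hAw k)]

variable [DecidableEq ι] {A : Matrix ι ι R} (hA : ∀ i j, i ≠ j → A i j ≤ 0)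
  {w : ι → R} (hw : ∀ i, 0 < w i) (hAw : ∀ i, 0 < (A *ᵥ w) i)
include hA hw hAw

theorem isUnit_of_mulVec_pos : IsUnit A := by
  rw [isUnit_iff_isUnit_det, isUnit_iff_ne_zero]
  intro hdet
  obtain ⟨v, hv, hAv⟩ := exists_mulVec_eq_zero_iff.mpr hdet
  refine hv (le_antisymm ?_ (nonneg_of_mulVec_nonneg hA hw hAw hAv.ge))
  simpa using nonneg_of_mulVec_nonneg hA hw hAw (x := -v) (by simp [mulVec_neg, hAv])

theorem inv_nonneg_of_mulVec_pos (i j : ι) : 0 ≤ A⁻¹ i j := by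
  have hdet := (isUnit_iff_isUnit_det A).mp (isUnit_of_mulVec_pos hA hw hAw)
  have hcol : A *ᵥ (A⁻¹ *ᵥ Pi.single j 1) = Pi.single j 1 := by
    rw [mulVec_mulVec, mul_nonsing_inv _ hdet, one_mulVec]
  have := nonneg_of_mulVec_nonneg hA hw hAw (x := A⁻¹ *ᵥ Pi.single j 1)
    (by rw [hcol]; exact Pi.single_nonneg.2 zero_le_one)
  simpa [mulVec_single_one] using this i

end MinimumPrinciple

open scoped Norms.Operator in
theorem spectralRadius_lt_one_of_weighted_row_sum_lt [DecidableEq ι] {𝕜 : Type*} [RCLike 𝕜]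
    (X : Matrix ι ι 𝕜) {w : ι → ℝ} (hw : ∀ i, 0 < w i) (hX : ∀ i, ∑ j, ‖X i j‖ * w j < w i) :
    spectralRadius 𝕜 X < 1 := by
  cases isEmpty_or_nonempty ι
  · rw [spectrum.SpectralRadius.of_subsingleton]
    exact zero_lt_one
  have hw' : ∀ i, (w i : 𝕜) ≠ 0 := fun i => RCLike.ofReal_ne_zero.2 (hw i).ne'
  let D : (Matrix ι ι 𝕜)ˣ :=
    ⟨diagonal fun i => (w i : 𝕜), diagonal fun i => (w i : 𝕜)⁻¹,
      by simp [diagonal_mul_diagonal, hw'], by simp [diagonal_mul_diagonal, hw']⟩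
  set Y : Matrix ι ι 𝕜 := (diagonal fun i => (w i : 𝕜)⁻¹) * X * diagonal fun i => (w i : 𝕜)
  have hspec : spectrum 𝕜 Y = spectrum 𝕜 X := spectrum.units_conjugate' (u := D)
  have hnorm : ‖Y‖₊ < 1 := by
    rw [linfty_opNNNorm_def, Finset.sup_lt_iff (by simp)]
    intro i _
    rw [← NNReal.coe_lt_coe]
    push_cast
    simp only [Y, mul_diagonal, diagonal_mul, norm_mul, norm_inv, RCLike.norm_ofReal,
      abs_of_pos (hw _)]
    simp only [mul_assoc, ← Finset.mul_sum]
    rw [inv_mul_lt_one₀ (hw i)]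
    exact hX i
  calc spectralRadius 𝕜 X = spectralRadius 𝕜 Y := by simp only [spectralRadius, hspec]
    _ ≤ ‖Y‖₊ := spectrum.spectralRadius_le_nnnorm Y
    _ < 1 := by exact_mod_cast hnorm

end Matrix

theorem IsZMatrix.of_sub_one {n : ℕ} {A : Matrix (Fin n) (Fin n) ℝ} (h : IsZMatrix (A - 1)) :
    IsZMatrix A := fun i j hij => by
  simpa [one_apply_ne hij] using h i j hij

theorem IsMMatrix.of_mulVec_pos {n : ℕ} {A : Matrix (Fin n) (Fin n) ℝ} (hA : IsZMatrix A)
    {w : Fin n → ℝ} (hw : ∀ i, 0 < w i) (hAw : ∀ i, 0 < (A *ᵥ w) i) : IsMMatrix A :=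
  ⟨hA, isUnit_of_mulVec_pos hA hw hAw, inv_nonneg_of_mulVec_pos hA hw hAw⟩

theorem stmt_18 {n : ℕ} (A : Matrix (Fin n) (Fin n) ℝ)
    (h : IsMMatrix (A - 1)) :
    spectralRadius ℂ ((A⁻¹).map (fun t => ((|t| : ℝ) : ℂ))) < 1 := by
  obtain ⟨hZ, hU, hinv⟩ := h
  have hdet := (isUnit_iff_isUnit_det _).mp hU
  set w := (A - 1)⁻¹ *ᵥ 1 with hw_def
  have hw : ∀ i, 0 < w i :=
    mulVec_pos_of_nonneg_of_mul_eq_one hinv (nonsing_inv_mul _ hdet) fun _ => one_pos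
  have hAw : A *ᵥ w = 1 + w := by
    calc A *ᵥ w = (A - 1) *ᵥ w + w := by rw [sub_mulVec, one_mulVec, sub_add_cancel]
      _ = 1 + w := by rw [hw_def, mulVec_mulVec, mul_nonsing_inv _ hdet, one_mulVec]
  obtain ⟨-, hAU, hAinv⟩ := IsMMatrix.of_mulVec_pos hZ.of_sub_one hw fun i => by
    rw [hAw, Pi.add_apply, Pi.one_apply]
    linarith [hw i]
  have hAdet := (isUnit_iff_isUnit_det _).mp hAU
  have hAinv_w : A⁻¹ *ᵥ w + A⁻¹ *ᵥ 1 = w := by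
    rw [← mulVec_add, add_comm, ← hAw, mulVec_mulVec, nonsing_inv_mul _ hAdet, one_mulVec]
  have hAinv_one : ∀ i, 0 < (A⁻¹ *ᵥ 1) i :=
    mulVec_pos_of_nonneg_of_mul_eq_one hAinv (nonsing_inv_mul _ hAdet) fun _ => one_pos
  refine spectralRadius_lt_one_of_weighted_row_sum_lt _ hw fun i => ?_
  have hrow : ∑ j, ‖((|A⁻¹ i j| : ℝ) : ℂ)‖ * w j = (A⁻¹ *ᵥ w) i := by
    simp only [Complex.norm_real, Real.norm_eq_abs, abs_of_nonneg (hAinv i _)]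
    rfl
  have hi : (A⁻¹ *ᵥ w) i + (A⁻¹ *ᵥ 1) i = w i := congr_fun hAinv_w i
  simp only [map_apply, hrow]
  linarith [hAinv_one i]
end
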